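/- Let F be a finite field with q elements and let K be a field extension of F of degree d + 1. Consider the projective space ℙ(K^{d+1}) of lines in the K-vector space K^{d+1}, and let S be the set of points [v_0 : v_1 : ⋯ : v_d] ∈ ℙ(K^{d+1}) lying on no F-rational hyperplane, i.e. such that for every nonzero vector a = (a_0,…,a_d) ∈ F^{d+1} one has a_0 v_0 + a_1 v_1 + ⋯ + a_d v_d ≠ 0 (a condition independent of the choice of representative v). Then the cardinality of S satisfies |S| · (q^{d+1} − 1) = ∏_{i=0}^{d} (q^{d+1} − q^i); in other words, |S| equals the cardinality of GL_{d+1}(F) divided by q^{d+1} − 1. -/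

import Mathlib

/-!
A point `[v]` avoids every `F`-rational hyperplane exactly when the coordinates `v₀, …, v_d` are
`F`-linearly independent in `K`, a condition invariant under scaling by `Kˣ`. Hence the pairs
(point of `S`, element of `Kˣ`) correspond to the linearly independent `(d + 1)`-tuples in
`K ≅ F^{d+1}`, i.e. to the ordered `F`-bases of `K`, of which there are `|GL_{d+1}(F)|`.
-/

open scoped LinearAlgebra.Projectivization

theorem linearIndependent_iff_forall_sum_algebraMap_mul_ne_zero {ι F A : Type*} [Fintype ι]
    [CommRing F] [Ring A] [Algebra F A] (v : ι → A) :
    LinearIndependent F v ↔ ∀ a : ι → F, a ≠ 0 → ∑ i, algebraMap F A (a i) * v i ≠ 0 := by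
  simp only [Fintype.linearIndependent_iff, Algebra.smul_def, ne_eq, not_imp_not, funext_iff,
    Pi.zero_apply]

theorem linearIndependent_units_smul_iff {ι F K V : Type*} [CommRing F] [Field K] [AddCommGroup V]
    [Algebra F K] [Module K V] [Module F V] [IsScalarTower F K V] (c : Kˣ) (v : ι → V) :
    LinearIndependent F (c • v) ↔ LinearIndependent F v :=
  ((LinearEquiv.smulOfUnit c).restrictScalars F).toLinearMap.linearIndependent_iff
    (LinearEquiv.ker _)

namespace Projectivization

variable {k V : Type*} [DivisionRing k] [AddCommGroup V] [Module k V]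

theorem units_smul_rep_inj {p p' : ℙ k V} {c c' : kˣ} :
    c • p.rep = c' • p'.rep ↔ p = p' ∧ c = c' := by
  refine ⟨fun h => ?_, by rintro ⟨rfl, rfl⟩; rfl⟩
  obtain rfl : p = p' := by
    rw [← mk_rep p, ← mk_rep p', mk_eq_mk_iff]
    exact ⟨c⁻¹ * c', by rw [mul_smul, ← h, inv_smul_smul]⟩
  exact ⟨rfl, Units.ext <| smul_left_injective k p.rep_nonzero h⟩

theorem exists_units_smul_rep_eq {v : V} (hv : v ≠ 0) : ∃ (p : ℙ k V) (c : kˣ), c • p.rep = v := by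
  obtain ⟨a, ha⟩ := exists_smul_eq_mk_rep k v hv
  exact ⟨mk k v hv, a⁻¹, by rw [← ha, inv_smul_smul]⟩

theorem card_subtype_rep_mul_card_units (P : V → Prop) (hP : ∀ (c : kˣ) v, P (c • v) ↔ P v)
    (hP0 : ¬P 0) :
    Nat.card {p : ℙ k V // P p.rep} * Nat.card kˣ = Nat.card {v : V // P v} := by
  rw [← Nat.card_prod]
  refine Nat.card_congr <| Equiv.ofBijective (fun x => ⟨x.2 • x.1.1.rep, (hP _ _).2 x.1.2⟩) ⟨?_, ?_⟩
  · rintro ⟨⟨p, _⟩, c⟩ ⟨⟨p', _⟩, c'⟩ h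
    obtain ⟨rfl, rfl⟩ := units_smul_rep_inj.1 (congrArg Subtype.val h)
    rfl
  · rintro ⟨v, hv⟩
    obtain ⟨p, c, rfl⟩ := exists_units_smul_rep_eq (k := k) fun h => hP0 (h ▸ hv)
    exact ⟨(⟨p, (hP c _).1 hv⟩, c), rfl⟩

end Projectivization

/-- Let `F` be a finite field with `q` elements and `K` a field extension of
`F` of degree `d + 1`.  Let `S` be the set of points of the projective space `ℙ(K^{d+1})`
lying on no `F`-rational hyperplane, i.e. points whose (any) representative `v` satisfies
`∑ i, a i • v i ≠ 0` for every nonzero `a ∈ F^{d+1}`.  Then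
`|S| · (q^{d+1} − 1) = ∏_{i=0}^{d} (q^{d+1} − q^i) = |GL_{d+1}(F)|`. -/
theorem stmt10 {F K : Type*} [Field F] [Fintype F] [Field K] [Algebra F K]
    {d : ℕ} (hdim : Module.finrank F K = d + 1) :
    Nat.card {v : Projectivization K (Fin (d + 1) → K) //
        ∀ a : Fin (d + 1) → F, a ≠ 0 →
          (∑ i, algebraMap F K (a i) * v.rep i) ≠ 0}
      * (Fintype.card F ^ (d + 1) - 1)
      = ∏ i ∈ Finset.range (d + 1),
          (Fintype.card F ^ (d + 1) - Fintype.card F ^ i) := by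
  have : Module.Finite F K := Module.finite_of_finrank_pos (by omega)
  have : Finite K := Module.finite_of_finite F
  have hunits : Nat.card Kˣ = Fintype.card F ^ (d + 1) - 1 := by
    rw [Nat.card_units, ← hdim, ← Nat.card_eq_fintype_card, ← Module.natCard_eq_pow_finrank]
  simp_rw [← linearIndependent_iff_forall_sum_algebraMap_mul_ne_zero]
  rw [← hunits, Projectivization.card_subtype_rep_mul_card_units (k := K)
      (fun v : Fin (d + 1) → K => LinearIndependent F v) (linearIndependent_units_smul_iff (F := F))
      fun h => h.ne_zero 0 rfl,
    card_linearIndependent hdim.ge, hdim,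
    Fin.prod_univ_eq_prod_range (fun i => Fintype.card F ^ (d + 1) - Fintype.card F ^ i)]
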